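/- Let (I, J) be an l_1-admissible pair with |I| = a, |J| = b = a+c, and set l'_1 = l_1 + c − a − max(l_1+c−k, 0) and l'_2 = k − c. Then the vectors ρ'(I,J) = κ(Ĩ) − κ[l'_1+1, k] and σ'(I,J) = κ(J) − κ(I) − κ[l'_2+1, k] satisfy: all components are ≥ 0, and the k-th components ρ'(I,J)_k and σ'(I,J)_k are both 0. -/

import Mathlib

/-- `κ(I)_α = #{i ∈ I : i ≤ α}`. -/
def kappa (I : Finset ℕ) (α : ℕ) : ℤ := ((I.filter (fun i => i ≤ α)).card : ℤ)

/-- The set `Ĩ`: for `l₁+c < k`, `I` together with the complement `[l₁+1,k] \ J`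
minus its `p − a` smallest elements; for `l₁+c ≥ k`, just `I`. -/
def Itilde (k l1 a c p : ℕ) (I J : Finset ℕ) : Finset ℕ :=
  if l1 + c < k then
    I ∪ (((Finset.Icc (l1 + 1) k \ J).sort (· ≤ ·)).drop (p - a)).toFinset
  else I

/-!
A set `S ⊆ [1, k]` has at most `k - α` elements above `α`, so `|S| ≥ k - m` forces
`κ(S)_α ≥ max(0, α - m) = κ[m+1, k]_α`, with equality of both sides at `α = k` when
`|S| = k - m`. For `ρ'` this is applied to `S = Ĩ`, whose size is `k - l'₁` because the
admissibility bound `u_a < v'_a` keeps `I` below the part of the complement of `J` that is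
added to it. For `σ'`, the bounds `v_i ≤ u_i` give `κ(I) ≤ κ(J)`, while
`κ(J)_α - κ(I)_α ≥ (a + c) - (k - α) - a = α - (k - c)`.
-/

open Finset

lemma kappa_le_card (S : Finset ℕ) (α : ℕ) : kappa S α ≤ S.card := by
  unfold kappa
  exact_mod_cast card_filter_le _ _

lemma kappa_eq_card {k : ℕ} {S : Finset ℕ} (hS : S ⊆ Icc 1 k) : kappa S k = S.card := by
  unfold kappa
  rw [filter_true_of_mem fun x hx => (mem_Icc.1 (hS hx)).2]

lemma kappa_Icc (m k α : ℕ) : kappa (Icc (m + 1) k) α = ((min k α - m : ℕ) : ℤ) := by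
  have : (Icc (m + 1) k).filter (· ≤ α) = Icc (m + 1) (min k α) := by
    ext x
    simp only [mem_filter, mem_Icc]
    omega
  rw [kappa, this, Nat.card_Icc]
  omega

lemma card_le_kappa_add {k : ℕ} {S : Finset ℕ} (hS : S ⊆ Icc 1 k) (α : ℕ) :
    (S.card : ℤ) ≤ kappa S α + ((k - α : ℕ) : ℤ) := by
  have hgt : S.filter (¬ · ≤ α) ⊆ Icc (α + 1) k := fun x hx => by
    rw [mem_filter] at hx
    have := mem_Icc.1 (hS hx.1)
    exact mem_Icc.2 ⟨by omega, this.2⟩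
  have := card_le_card hgt
  rw [Nat.card_Icc] at this
  have := card_filter_add_card_filter_not (s := S) (· ≤ α)
  unfold kappa
  omega

lemma kappa_Icc_add_le {k m α : ℕ} {I J : Finset ℕ} (hJ : J ⊆ Icc 1 k)
    (hIJ : kappa I α ≤ kappa J α) (hcard : I.card + k ≤ J.card + m) :
    kappa (Icc (m + 1) k) α + kappa I α ≤ kappa J α := by
  have := card_le_kappa_add hJ α
  have := kappa_le_card I α
  rw [kappa_Icc]
  omega

lemma kappa_Icc_le {k m α : ℕ} {S : Finset ℕ} (hS : S ⊆ Icc 1 k) (hcard : k ≤ S.card + m) :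
    kappa (Icc (m + 1) k) α ≤ kappa S α := by
  simpa [kappa] using kappa_Icc_add_le (I := ∅) (α := α) hS (by simp [kappa])
    (by simpa using hcard)

lemma kappa_image_le_of_le {a b : ℕ} {u : Fin a → ℕ} {v : Fin b → ℕ}
    (hv : Function.Injective v) {f : Fin a → Fin b} (hf : Function.Injective f)
    (hvu : ∀ i, v (f i) ≤ u i) (α : ℕ) :
    kappa (image u univ) α ≤ kappa (image v univ) α := by
  unfold kappa
  rw [filter_image, filter_image, card_image_of_injective _ hv]
  refine Int.ofNat_le.2 (card_image_le.trans (card_le_card_of_injOn f ?_ hf.injOn))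
  intro i hi
  simp only [coe_filter, Set.mem_ofPred_eq, mem_univ, true_and] at hi ⊢
  exact (hvu i).trans hi

lemma card_Icc_sdiff_add_card_filter {k l : ℕ} {J : Finset ℕ} (hJ : J ⊆ Icc 1 k) :
    (Icc (l + 1) k \ J).card + J.card = k - l + (J.filter (· ≤ l)).card := by
  have hinter : Icc (l + 1) k ∩ J = J.filter (¬ · ≤ l) := by
    ext x
    have := fun {y : ℕ} (h : y ∈ J) => mem_Icc.1 (hJ h)
    simp only [mem_inter, mem_filter, mem_Icc]
    constructor
    · rintro ⟨⟨h1, -⟩, h3⟩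
      exact ⟨h3, by omega⟩
    · rintro ⟨h1, h2⟩
      exact ⟨⟨by omega, (this h1).2⟩, h1⟩
  have := card_sdiff_add_card_inter (Icc (l + 1) k) J
  rw [hinter, Nat.card_Icc] at this
  have := card_filter_add_card_filter_not (s := J) (· ≤ l)
  omega

lemma disjoint_toFinset_drop {I : Finset ℕ} {L : List ℕ} (hL : L.Pairwise (· ≤ ·)) {n : ℕ}
    (hn : n < L.length) (hI : ∀ x ∈ I, x < L[n]) : Disjoint I (L.drop n).toFinset := by
  rw [disjoint_left]
  intro x hxI hxD
  have hsorted := hL.sublist (List.drop_sublist n L)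
  rw [List.mem_toFinset, List.drop_eq_getElem_cons hn] at hxD
  rw [List.drop_eq_getElem_cons hn, List.pairwise_cons] at hsorted
  rcases List.mem_cons.1 hxD with hx | hx
  · exact (hI x hxI).ne hx
  · exact (hI x hxI).not_ge (hsorted.1 x hx)

lemma Itilde_subset {k l1 a c p : ℕ} {I J : Finset ℕ} (hI : I ⊆ Icc 1 k) :
    Itilde k l1 a c p I J ⊆ Icc 1 k := by
  unfold Itilde
  split_ifs
  · refine union_subset hI fun y hy => ?_
    have hyC : y ∈ Icc (l1 + 1) k \ J :=
      (mem_sort (· ≤ ·)).1 (List.mem_of_mem_drop (List.mem_toFinset.1 hy))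
    have := mem_Icc.1 (mem_sdiff.1 hyC).1
    exact mem_Icc.2 ⟨by omega, this.2⟩
  · exact hI

lemma card_Itilde {k l1 a c p : ℕ} {I J : Finset ℕ} (hI : I ⊆ Icc 1 k) (hJ : J ⊆ Icc 1 k)
    (hIcard : I.card = a) (hJcard : J.card = a + c) (hp : (J.filter (· ≤ l1)).card = p)
    (hap : a ≤ p) (hsep : l1 + c < k → ∀ x ∈ I,
      x < ((Icc (l1 + 1) k \ J).sort (· ≤ ·)).getD (p - a) (k + 1)) :
    (Itilde k l1 a c p I J).card = k - (l1 + c - a - (l1 + c - k)) := by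
  have hak : a ≤ k := by simpa [hIcard] using card_le_card hI
  have hpl1 : p ≤ l1 := by
    have hsub : J.filter (· ≤ l1) ⊆ Icc 1 l1 := fun x hx => by
      rw [mem_filter] at hx
      exact mem_Icc.2 ⟨(mem_Icc.1 (hJ hx.1)).1, hx.2⟩
    simpa [hp] using card_le_card hsub
  have hC := card_Icc_sdiff_add_card_filter (l := l1) hJ
  unfold Itilde
  split_ifs with hcase
  · set L := (Icc (l1 + 1) k \ J).sort (· ≤ ·)
    have hn : p - a < L.length := by
      rw [length_sort]
      omega
    have hdisj : Disjoint I (L.drop (p - a)).toFinset := by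
      refine disjoint_toFinset_drop (pairwise_sort _ _) hn fun x hx => ?_
      simpa only [List.getD_eq_getElem _ _ hn] using hsep hcase x hx
    rw [card_union_of_disjoint hdisj, List.toFinset_card_of_nodup
      ((List.drop_sublist _ _).nodup (sort_nodup _ _)), List.length_drop]
    rw [length_sort] at hn ⊢
    omega
  · omega

theorem stmt9_general (k l1 a c : ℕ)
    (u : Fin a → ℕ) (v : Fin (a + c) → ℕ) (hu : StrictMono u) (hv : StrictMono v)
    (hur : ∀ i, u i ∈ Finset.Icc 1 k) (hvr : ∀ i, v i ∈ Finset.Icc 1 k)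
    (p : ℕ) (hp : p = (Finset.univ.filter (fun i : Fin (a + c) => v i ≤ l1)).card)
    (hap : a ≤ p) (hpb : p ≤ a + c)
    (hadm : ∀ i : Fin a, v (Fin.castLE (hap.trans hpb) i) ≤ u i ∧
      u i < ((Finset.Icc (l1 + 1) k \ Finset.image v Finset.univ).sort (· ≤ ·)).getD
        (p - ((i : ℕ) + 1)) (k + 1)) :
    (∀ α ∈ Finset.Icc 1 k,
      0 ≤ kappa (Itilde k l1 a c p (Finset.image u Finset.univ) (Finset.image v Finset.univ)) α
            - kappa (Finset.Icc (l1 + c - a - (l1 + c - k) + 1) k) α ∧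
      0 ≤ kappa (Finset.image v Finset.univ) α - kappa (Finset.image u Finset.univ) α
            - kappa (Finset.Icc (k - c + 1) k) α) ∧
    kappa (Itilde k l1 a c p (Finset.image u Finset.univ) (Finset.image v Finset.univ)) k
        - kappa (Finset.Icc (l1 + c - a - (l1 + c - k) + 1) k) k = 0 ∧
    kappa (Finset.image v Finset.univ) k - kappa (Finset.image u Finset.univ) k
        - kappa (Finset.Icc (k - c + 1) k) k = 0 := by
  set I := image u univ
  set J := image v univ
  have hIk : I ⊆ Icc 1 k := by simpa [I, subset_iff] using hur
  have hJk : J ⊆ Icc 1 k := by simpa [J, subset_iff] using hvr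
  have cardI : I.card = a := by simp [I, card_image_of_injective _ hu.injective]
  have cardJ : J.card = a + c := by simp [J, card_image_of_injective _ hv.injective]
  have hck : a + c ≤ k := by simpa [cardJ] using card_le_card hJk
  have hpJ : (J.filter (· ≤ l1)).card = p := by
    rw [hp, filter_image, card_image_of_injective _ hv.injective]
  have hsep : l1 + c < k → ∀ x ∈ I,
      x < ((Icc (l1 + 1) k \ J).sort (· ≤ ·)).getD (p - a) (k + 1) := by
    rintro - x hx
    obtain ⟨i, -, rfl⟩ := mem_image.1 hx
    have hlast : a - 1 + 1 = a := by have := i.isLt; omega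
    calc u i ≤ u ⟨a - 1, by omega⟩ := hu.monotone (Fin.mk_le_mk.2 (by omega))
      _ < _ := by simpa [hlast] using (hadm ⟨a - 1, by omega⟩).2
  have hdom : ∀ α, kappa I α ≤ kappa J α :=
    kappa_image_le_of_le hv.injective (Fin.castLE_injective _) fun i => (hadm i).1
  have hItk : Itilde k l1 a c p I J ⊆ Icc 1 k := Itilde_subset hIk
  have hIt := card_Itilde hIk hJk cardI cardJ hpJ hap hsep
  refine ⟨fun α _ => ⟨?_, ?_⟩, ?_, ?_⟩
  · have := kappa_Icc_le (α := α) (m := l1 + c - a - (l1 + c - k)) hItk (by omega)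
    omega
  · have := kappa_Icc_add_le (m := k - c) hJk (hdom α) (by omega)
    omega
  · rw [kappa_eq_card hItk, kappa_Icc, hIt]
    omega
  · rw [kappa_eq_card hJk, kappa_eq_card hIk, kappa_Icc, cardI, cardJ]
    omega

/-- for an `l₁`-admissible pair `(I,J)` with `|I| = a`, `|J| = a+c`,
and `l'₁ = l₁+c−a−(l₁+c−k)⁺`, `l'₂ = k−c`, the vectors
`ρ'(I,J) = κ(Ĩ) − κ[l'₁+1,k]` and `σ'(I,J) = κ(J) − κ(I) − κ[l'₂+1,k]` have
all components nonnegative, and their `k`-th components vanish. -/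
theorem stmt9 (k l1 a c : ℕ) (hl1 : l1 ≤ k)
    (u : Fin a → ℕ) (v : Fin (a + c) → ℕ) (hu : StrictMono u) (hv : StrictMono v)
    (hur : ∀ i, u i ∈ Finset.Icc 1 k) (hvr : ∀ i, v i ∈ Finset.Icc 1 k)
    (p : ℕ) (hp : p = (Finset.univ.filter (fun i : Fin (a + c) => v i ≤ l1)).card)
    (hap : a ≤ p) (hpb : p ≤ a + c)
    (hadm : ∀ i : Fin a, v (Fin.castLE (hap.trans hpb) i) ≤ u i ∧
      u i < ((Finset.Icc (l1 + 1) k \ Finset.image v Finset.univ).sort (· ≤ ·)).getD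
        (p - ((i : ℕ) + 1)) (k + 1)) :
    (∀ α ∈ Finset.Icc 1 k,
      0 ≤ kappa (Itilde k l1 a c p (Finset.image u Finset.univ) (Finset.image v Finset.univ)) α
            - kappa (Finset.Icc (l1 + c - a - (l1 + c - k) + 1) k) α ∧
      0 ≤ kappa (Finset.image v Finset.univ) α - kappa (Finset.image u Finset.univ) α
            - kappa (Finset.Icc (k - c + 1) k) α) ∧
    kappa (Itilde k l1 a c p (Finset.image u Finset.univ) (Finset.image v Finset.univ)) k
        - kappa (Finset.Icc (l1 + c - a - (l1 + c - k) + 1) k) k = 0 ∧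
    kappa (Finset.image v Finset.univ) k - kappa (Finset.image u Finset.univ) k
        - kappa (Finset.Icc (k - c + 1) k) k = 0 :=
  stmt9_general k l1 a c u v hu hv hur hvr p hp hap hpb hadm
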